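/- Let n ≥ 1 and let Δ ⊂ ℝ^n be a compact convex set with n·Π_n ⊆ Δ. Then ivol(Δ) ≥ (1/4)·vol(Δ). Moreover, for any integral box Π containing the origin one has ivol(Π ∩ Δ) ≥ (1/4)·vol(Π ∩ Δ). -/

import Mathlib

/-!
Let `t = 1 - 1/(2n)`. For `x ∈ Δ` the point `t • x` is a convex combination of `x` and a point
of `n • Π_n` at weight `1/(2n)`, so every point within sup-distance `1/2` of `t • x` lies in `Δ`;
in particular so does the coordinatewise rounding of `t • x`, which stays in `Π` as well when
`0 ∈ Π`. Hence for `T = Δ` or `T = Π ∩ Δ` the shrunken set `t • T` is covered by the unit cubes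
centred at the integer points of `T`, giving `t ^ n · vol(T) ≤ ivol(T)`, and `t ^ n ≥ 1/2` by
Bernoulli's inequality.
-/

open MeasureTheory Pointwise

/-- The cube `[-s,s]^n` in `ℝ^n`. -/
def cube (n : ℕ) (s : ℝ) : Set (Fin n → ℝ) := {x | ∀ i, x i ∈ Set.Icc (-s) s}

/-- The set of integer points of a set `S ⊆ ℝ^n`. -/
def intPts {n : ℕ} (S : Set (Fin n → ℝ)) : Set (Fin n → ℝ) :=
  {x ∈ S | ∀ i, ∃ k : ℤ, x i = (k : ℝ)}

/-- An integral box `[a_1,b_1] × ⋯ × [a_n,b_n]`. -/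
def intBox {n : ℕ} (a b : Fin n → ℤ) : Set (Fin n → ℝ) :=
  {x | ∀ i, x i ∈ Set.Icc (a i : ℝ) (b i : ℝ)}

lemma round_monotone : Monotone (round : ℝ → ℤ) := fun x y hxy => by
  simpa only [round_eq] using Int.floor_mono (by linarith)

section

variable {n : ℕ}

noncomputable def roundPt (y : Fin n → ℝ) : Fin n → ℝ := fun i => round (y i)

lemma roundPt_mem_intPts {S : Set (Fin n → ℝ)} {y : Fin n → ℝ} (hy : roundPt y ∈ S) :
    roundPt y ∈ intPts S :=
  ⟨hy, fun i => ⟨round (y i), rfl⟩⟩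

lemma intPts_mono {S T : Set (Fin n → ℝ)} (h : S ⊆ T) : intPts S ⊆ intPts T :=
  fun _ hx => ⟨h hx.1, hx.2⟩

lemma intPts_finite {S : Set (Fin n → ℝ)} (hS : Bornology.IsBounded S) :
    (intPts S).Finite := by
  obtain ⟨R, hR⟩ := isBounded_iff_forall_norm_le.1 hS
  refine (Set.Finite.pi (t := fun _ : Fin n => ((Int.cast : ℤ → ℝ) '' Set.Icc (-⌈R⌉) ⌈R⌉))
    fun _ => (Set.finite_Icc _ _).image _).subset ?_
  rintro x ⟨hxS, hxint⟩ i -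
  obtain ⟨k, hk⟩ := hxint i
  have hkR : |(k : ℝ)| ≤ ⌈R⌉ :=
    hk ▸ ((norm_le_pi_norm x i).trans (hR x hxS)).trans (Int.le_ceil R)
  exact ⟨k, abs_le.1 (by exact_mod_cast hkR), hk.symm⟩

lemma volume_le_encard_image_roundPt (S : Set (Fin n → ℝ)) :
    volume S ≤ (roundPt '' S).encard := by
  set unitCube : (Fin n → ℝ) → Set (Fin n → ℝ) :=
    fun p => Set.univ.pi fun i => Set.Icc (p i - 1 / 2) (p i + 1 / 2)
  have hcover : S ⊆ ⋃ p ∈ roundPt '' S, unitCube p := by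
    intro y hy
    refine Set.mem_biUnion (Set.mem_image_of_mem _ hy) fun i _ => ?_
    have := abs_le.1 (abs_sub_round (y i))
    simp only [roundPt]
    constructor <;> linarith
  have hcountable : (roundPt '' S).Countable :=
    (Set.countable_range fun k : Fin n → ℤ => fun i => (k i : ℝ)).mono <| by
      rintro _ ⟨y, -, rfl⟩
      exact ⟨fun i => round (y i), rfl⟩
  calc volume S ≤ volume (⋃ p ∈ roundPt '' S, unitCube p) := measure_mono hcover
    _ ≤ ∑' p : roundPt '' S, volume (unitCube p) := measure_biUnion_le _ hcountable _
    _ = (roundPt '' S).encard := by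
      simp only [unitCube, volume_pi_pi, Real.volume_Icc, add_sub_sub_cancel, add_halves,
        ENNReal.ofReal_one, Finset.prod_const_one, ENNReal.tsum_set_one]

lemma ofReal_pow_mul_volume_le_ncard_intPts {T : Set (Fin n → ℝ)} {t : ℝ} (ht : 0 ≤ t)
    (hfin : (intPts T).Finite) (hround : ∀ x ∈ T, roundPt (t • x) ∈ T) :
    ENNReal.ofReal (t ^ n) * volume T ≤ (intPts T).ncard := by
  have himage : roundPt '' (t • T) ⊆ intPts T := by
    rintro _ ⟨_, ⟨x, hx, rfl⟩, rfl⟩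
    exact roundPt_mem_intPts (hround x hx)
  calc ENNReal.ofReal (t ^ n) * volume T = volume (t • T) := by
        rw [Measure.addHaar_smul, Module.finrank_fin_fun, abs_pow, abs_of_nonneg ht]
    _ ≤ (roundPt '' (t • T)).encard := volume_le_encard_image_roundPt _
    _ ≤ (intPts T).encard := by exact_mod_cast Set.encard_le_encard himage
    _ = (intPts T).ncard := by rw [← hfin.cast_ncard_eq]; rfl

lemma one_div_two_mul_natCast_le_half (n : ℕ) : 1 / (2 * (n : ℝ)) ≤ 1 / 2 := by
  rcases n.eq_zero_or_pos with rfl | hn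
  · norm_num
  have : (1 : ℝ) ≤ n := by exact_mod_cast hn
  gcongr
  linarith

lemma half_le_one_sub_one_div_two_mul_pow (n : ℕ) :
    (1 / 2 : ℝ) ≤ (1 - 1 / (2 * n)) ^ n := by
  rcases n.eq_zero_or_pos with rfl | hn
  · norm_num
  have hbern := one_add_mul_le_pow (a := -(1 / (2 * (n : ℝ))))
    (by linarith [one_div_two_mul_natCast_le_half n]) n
  have hn' : (n : ℝ) ≠ 0 := by positivity
  calc (1 / 2 : ℝ) = 1 + n * -(1 / (2 * n)) := by field_simp; ring
    _ ≤ _ := by simpa only [sub_eq_add_neg] using hbern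

lemma quarter_mul_volume_le_ncard_intPts {T : Set (Fin n → ℝ)} (hfin : (intPts T).Finite)
    (hround : ∀ x ∈ T, roundPt ((1 - 1 / (2 * (n : ℝ))) • x) ∈ T) :
    (1 / 4 : ℝ) * (volume T).toReal ≤ (intPts T).ncard := by
  set t : ℝ := 1 - 1 / (2 * (n : ℝ))
  have hhalf : (1 / 2 : ℝ) ≤ t ^ n := half_le_one_sub_one_div_two_mul_pow n
  have ht : 0 ≤ t := by linarith [one_div_two_mul_natCast_le_half n]
  have hreal : t ^ n * (volume T).toReal ≤ (intPts T).ncard := by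
    have := ENNReal.toReal_mono (ENNReal.natCast_ne_top _)
      (ofReal_pow_mul_volume_le_ncard_intPts ht hfin hround)
    rwa [ENNReal.toReal_mul, ENNReal.toReal_ofReal (by positivity),
      ENNReal.toReal_natCast] at this
  nlinarith [ENNReal.toReal_nonneg (a := volume T)]

lemma Convex.mem_of_abs_sub_mul_le {Δ : Set (Fin n → ℝ)} (hΔ : Convex ℝ Δ) {s t : ℝ}
    (hcube : cube n s ⊆ Δ) (ht0 : 0 ≤ t) (ht1 : t < 1) {x y : Fin n → ℝ} (hx : x ∈ Δ)
    (hy : ∀ i, |y i - t * x i| ≤ (1 - t) * s) : y ∈ Δ := by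
  have h1t : 0 < 1 - t := by linarith
  set v : Fin n → ℝ := (1 - t)⁻¹ • (y - t • x)
  have hv : v ∈ Δ := hcube fun i => by
    rw [Set.mem_Icc, ← abs_le]
    simp only [v, Pi.smul_apply, Pi.sub_apply, smul_eq_mul, abs_mul, abs_inv, abs_of_pos h1t]
    rw [inv_mul_le_iff₀ h1t]
    exact hy i
  have hy : y = t • x + (1 - t) • v := by
    simp only [v, smul_smul, mul_inv_cancel₀ h1t.ne', one_smul, add_sub_cancel]
  exact hy ▸ hΔ hx hv ht0 h1t.le (by ring)

lemma roundPt_smul_mem_of_cube_subset (hn : 1 ≤ n) {Δ : Set (Fin n → ℝ)} (hΔ : Convex ℝ Δ)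
    (hcube : cube n n ⊆ Δ) {x : Fin n → ℝ} (hx : x ∈ Δ) :
    roundPt ((1 - 1 / (2 * (n : ℝ))) • x) ∈ Δ := by
  have hn' : (0 : ℝ) < n := by exact_mod_cast hn
  have hpos : 0 < 1 / (2 * (n : ℝ)) := by positivity
  refine hΔ.mem_of_abs_sub_mul_le (t := 1 - 1 / (2 * (n : ℝ))) hcube
    (by linarith [one_div_two_mul_natCast_le_half n]) (by linarith) hx fun i => ?_
  have hwidth : (1 - (1 - 1 / (2 * (n : ℝ)))) * n = 1 / 2 := by field_simp; ring
  rw [hwidth, abs_sub_comm]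
  exact abs_sub_round _

lemma intBox_eq_Icc (a b : Fin n → ℤ) :
    intBox a b = Set.Icc (fun i => (a i : ℝ)) (fun i => (b i : ℝ)) := by
  ext x
  simp only [intBox, Set.mem_Icc, Pi.le_def, forall_and, Set.mem_ofPred_eq]

lemma convex_intBox (a b : Fin n → ℤ) : Convex ℝ (intBox a b) :=
  intBox_eq_Icc a b ▸ convex_Icc _ _

lemma roundPt_mem_intBox {a b : Fin n → ℤ} {y : Fin n → ℝ} (hy : y ∈ intBox a b) :
    roundPt y ∈ intBox a b := fun i => by
  have ha := round_monotone (hy i).1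
  have hb := round_monotone (hy i).2
  rw [round_intCast] at ha hb
  simp only [roundPt]
  exact ⟨by exact_mod_cast ha, by exact_mod_cast hb⟩

end

/-- Lemma: if `Δ ⊆ ℝ^n` is compact convex with `n·Π_n ⊆ Δ` then `ivol(Δ) ≥ vol(Δ)/4`;
moreover for any integral box `Π` containing the origin,
`ivol(Π ∩ Δ) ≥ vol(Π ∩ Δ)/4`. -/
theorem stmt_7 (n : ℕ) (hn : 1 ≤ n) (Δ : Set (Fin n → ℝ))
    (hΔc : IsCompact Δ) (hΔconv : Convex ℝ Δ) (hcube : cube n n ⊆ Δ) :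
    (1 / 4 : ℝ) * (volume Δ).toReal ≤ ((intPts Δ).ncard : ℝ) ∧
    ∀ a b : Fin n → ℤ, (0 : Fin n → ℝ) ∈ intBox a b →
      (1 / 4 : ℝ) * (volume (intBox a b ∩ Δ)).toReal ≤
        ((intPts (intBox a b ∩ Δ)).ncard : ℝ) := by
  set t : ℝ := 1 - 1 / (2 * (n : ℝ))
  have ht : t ∈ Set.Icc 0 1 :=
    ⟨by linarith [one_div_two_mul_natCast_le_half n], sub_le_self _ (by positivity)⟩
  have hfin : (intPts Δ).Finite := intPts_finite hΔc.isBounded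
  have hΔ : ∀ x ∈ Δ, roundPt (t • x) ∈ Δ := fun x hx =>
    roundPt_smul_mem_of_cube_subset hn hΔconv hcube hx
  refine ⟨quarter_mul_volume_le_ncard_intPts hfin hΔ, fun a b h0 => ?_⟩
  refine quarter_mul_volume_le_ncard_intPts
    (hfin.subset (intPts_mono Set.inter_subset_right)) fun x ⟨hxbox, hxΔ⟩ => ⟨?_, hΔ x hxΔ⟩
  exact roundPt_mem_intBox ((convex_intBox a b).smul_mem_of_zero_mem h0 hxbox ht)
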